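/- Let (Ω,F,P) be a probability space, (E,𝔈) a measurable space, X, Xₙ : Ω → E measurable, and 𝔖 ⊆ 𝔈 such that for every A ∈ 𝔈 and ε > 0 there exists S ∈ 𝔖 with P_X(A Δ S) < ε. Then the following are equivalent: (1) lim P(X ∈ S, Xₙ ∉ S) = 0 for all S ∈ 𝔖 and lim P(Xₙ ∈ A) = P(X ∈ A) for all A ∈ 𝔈; (2) lim E|f(X) − f(Xₙ)| = 0 for every bounded measurable f : E → ℝ. -/

import Mathlib

/-!
(1) ⇒ (2). Approximating a measurable `A` by some `S ∈ 𝔖` in `P_X`-measure, the event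
`{X ∈ A, Xₙ ∉ A}` is covered by `{X ∈ A \ S}`, `{X ∈ S, Xₙ ∉ S}` and `{Xₙ ∈ S \ A}`, whose
probabilities are eventually close to `P(X ∈ A \ S)`, `0` and `P(X ∈ S \ A)`; so
`P(X ∈ A, Xₙ ∉ A) → 0` for every measurable `A`. For `f` bounded by `C`, the level sets of
`⌊f / δ⌋` are finitely many, hence `P(⌊f(X) / δ⌋ ≠ ⌊f(Xₙ) / δ⌋) → 0`, and off this event
`|f(X) - f(Xₙ)| ≤ δ`, which gives `E|f(X) - f(Xₙ)| ≤ δ + 2C · o(1)`.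

(2) ⇒ (1). For `f = 𝟙_A`, `E|f(X) - f(Xₙ)| = P({X ∈ A} ∆ {Xₙ ∈ A})`, which controls both
`P(X ∈ A, Xₙ ∉ A)` and `|P(Xₙ ∈ A) - P(X ∈ A)|`.
-/

open MeasureTheory Filter Topology
open scoped ENNReal symmDiff

lemma abs_sub_le_of_floor_div_eq {a b δ : ℝ} (hδ : 0 < δ) (h : ⌊a / δ⌋ = ⌊b / δ⌋) :
    |a - b| ≤ δ := by
  have := Int.abs_sub_lt_one_of_floor_eq_floor h
  rw [← sub_div, abs_div, abs_of_pos hδ, div_lt_one hδ] at this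
  exact this.le

lemma finite_range_floor_div {E : Type*} {f : E → ℝ} {C : ℝ} (hC : ∀ x, |f x| ≤ C) {δ : ℝ}
    (hδ : 0 < δ) : (Set.range fun x => ⌊f x / δ⌋).Finite := by
  refine (Set.finite_Icc ⌊-C / δ⌋ ⌊C / δ⌋).subset ?_
  rintro _ ⟨x, rfl⟩
  obtain ⟨hlo, hhi⟩ := abs_le.1 (hC x)
  exact ⟨Int.floor_mono (div_le_div_of_nonneg_right hlo hδ.le),
    Int.floor_mono (div_le_div_of_nonneg_right hhi hδ.le)⟩

lemma measure_preimage_inter_preimage_compl_le {Ω E : Type*} [MeasurableSpace Ω]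
    {P : Measure Ω} (X Y : Ω → E) (A S : Set E) :
    P (X ⁻¹' A ∩ Y ⁻¹' Aᶜ) ≤
      P (X ⁻¹' (A \ S)) + P (X ⁻¹' S ∩ Y ⁻¹' Sᶜ) + P (Y ⁻¹' (S \ A)) := by
  have hsub : X ⁻¹' A ∩ Y ⁻¹' Aᶜ ⊆
      X ⁻¹' (A \ S) ∪ (X ⁻¹' S ∩ Y ⁻¹' Sᶜ) ∪ Y ⁻¹' (S \ A) := by
    intro ω
    simp only [Set.mem_union, Set.mem_inter_iff, Set.mem_preimage, Set.mem_sdiff,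
      Set.mem_compl_iff]
    tauto
  exact (measure_mono hsub).trans <|
    (measure_union_le _ _).trans (add_le_add_left (measure_union_le _ _) _)

section
variable {Ω E : Type*} [MeasurableSpace Ω] [MeasurableSpace E] {P : Measure Ω}

lemma tendsto_measure_preimage_inter_preimage_compl_of_approx {X : Ω → E} {Y : ℕ → Ω → E}
    {𝔖 : Set (Set E)} (h𝔖meas : ∀ S ∈ 𝔖, MeasurableSet S)
    (happrox : ∀ A : Set E, MeasurableSet A → ∀ ε : ℝ≥0∞, 0 < ε →
      ∃ S ∈ 𝔖, P (X ⁻¹' (A ∆ S)) < ε)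
    (h𝔖 : ∀ S ∈ 𝔖, Tendsto (fun n => P (X ⁻¹' S ∩ Y n ⁻¹' Sᶜ)) atTop (𝓝 0))
    (hlaw : ∀ A : Set E, MeasurableSet A →
      Tendsto (fun n => P (Y n ⁻¹' A)) atTop (𝓝 (P (X ⁻¹' A))))
    {A : Set E} (hA : MeasurableSet A) :
    Tendsto (fun n => P (X ⁻¹' A ∩ Y n ⁻¹' Aᶜ)) atTop (𝓝 0) := by
  refine ENNReal.tendsto_nhds_zero.2 fun ε hε => ?_
  obtain ⟨S, hS, hAS⟩ := happrox A hA (ε / 2) (ENNReal.half_pos hε.ne')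
  have hlim : Tendsto
      (fun n => P (X ⁻¹' (A \ S)) + P (X ⁻¹' S ∩ Y n ⁻¹' Sᶜ) + P (Y n ⁻¹' (S \ A))) atTop
      (𝓝 (P (X ⁻¹' (A \ S)) + 0 + P (X ⁻¹' (S \ A)))) :=
    (tendsto_const_nhds.add (h𝔖 S hS)).add (hlaw _ ((h𝔖meas S hS).diff hA))
  have hsmall : P (X ⁻¹' (A \ S)) + 0 + P (X ⁻¹' (S \ A)) < ε := by
    rw [add_zero, ← ENNReal.add_halves ε]
    exact ENNReal.add_lt_add
      ((measure_mono (Set.preimage_mono Set.subset_union_left)).trans_lt hAS)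
      ((measure_mono (Set.preimage_mono Set.subset_union_right)).trans_lt hAS)
  filter_upwards [hlim.eventually_lt_const hsmall] with n hn
  exact (measure_preimage_inter_preimage_compl_le X (Y n) A S).trans hn.le

lemma tendsto_measure_comp_ne_of_finite_range {ι : Type*} [MeasurableSpace ι]
    [MeasurableSingletonClass ι] {g : E → ι} (hg : Measurable g) (hfin : (Set.range g).Finite)
    {X : Ω → E} {Y : ℕ → Ω → E}
    (hsep : ∀ A : Set E, MeasurableSet A →
      Tendsto (fun n => P (X ⁻¹' A ∩ Y n ⁻¹' Aᶜ)) atTop (𝓝 0)) :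
    Tendsto (fun n => P {ω | g (X ω) ≠ g (Y n ω)}) atTop (𝓝 0) := by
  have hsum : Tendsto
      (fun n => ∑ j ∈ hfin.toFinset, P (X ⁻¹' (g ⁻¹' {j}) ∩ Y n ⁻¹' (g ⁻¹' {j})ᶜ)) atTop
      (𝓝 0) := by
    simpa using tendsto_finsetSum hfin.toFinset
      fun j _ => hsep (g ⁻¹' {j}) (hg (measurableSet_singleton j))
  refine tendsto_of_tendsto_of_tendsto_of_le_of_le tendsto_const_nhds hsum (fun _ => zero_le)
    fun n => (measure_mono fun ω hω => ?_).trans (measure_biUnion_finset_le _ _)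
  exact Set.mem_biUnion (hfin.mem_toFinset.2 ⟨X ω, rfl⟩) ⟨rfl, Ne.symm hω⟩

lemma integral_abs_comp_sub_le [IsProbabilityMeasure P] {ι : Type*} [MeasurableSpace ι]
    [MeasurableEq ι] {f : E → ℝ} {g : E → ι} (hg : Measurable g)
    {X Y : Ω → E} (hX : Measurable X) (hY : Measurable Y) {C δ : ℝ} (hC : ∀ x, |f x| ≤ C)
    (hfg : ∀ x y, g x = g y → |f x - f y| ≤ δ) :
    ∫ ω, |f (X ω) - f (Y ω)| ∂P ≤ δ + 2 * C * P.real {ω | g (X ω) ≠ g (Y ω)} := by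
  set bad := {ω | g (X ω) ≠ g (Y ω)}
  have hbad : MeasurableSet bad := (measurableSet_eq_fun (hg.comp hX) (hg.comp hY)).compl
  have hpt : ∀ ω, |f (X ω) - f (Y ω)| ≤ δ + bad.indicator (fun _ => 2 * C) ω := by
    intro ω
    by_cases hω : ω ∈ bad
    · have hδ : 0 ≤ δ := by simpa using hfg (X ω) (X ω) rfl
      rw [Set.indicator_of_mem hω]
      linarith [abs_sub (f (X ω)) (f (Y ω)), hC (X ω), hC (Y ω)]
    · rw [Set.indicator_of_notMem hω, add_zero]
      exact hfg _ _ (not_not.1 hω)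
  have hind : Integrable (bad.indicator fun _ => 2 * C) P :=
    (integrable_const _).indicator hbad
  calc ∫ ω, |f (X ω) - f (Y ω)| ∂P
      ≤ ∫ ω, (δ + bad.indicator (fun _ => 2 * C) ω) ∂P :=
        integral_mono_of_nonneg (ae_of_all _ fun _ => abs_nonneg _)
          ((integrable_const δ).add hind) (ae_of_all _ hpt)
    _ = δ + 2 * C * P.real bad := by
        rw [integral_add (integrable_const δ) hind, integral_const,
          integral_indicator_const _ hbad]
        simp [mul_comm]

lemma tendsto_integral_abs_comp_sub_of_tendsto_measure [IsProbabilityMeasure P]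
    {X : Ω → E} {Y : ℕ → Ω → E} (hX : Measurable X) (hY : ∀ n, Measurable (Y n))
    (hsep : ∀ A : Set E, MeasurableSet A →
      Tendsto (fun n => P (X ⁻¹' A ∩ Y n ⁻¹' Aᶜ)) atTop (𝓝 0))
    {f : E → ℝ} (hf : Measurable f) {C : ℝ} (hC : ∀ x, |f x| ≤ C) :
    Tendsto (fun n => ∫ ω, |f (X ω) - f (Y n ω)| ∂P) atTop (𝓝 0) := by
  refine tendsto_order.2 ⟨fun a ha => .of_forall fun n => ha.trans_le
    (integral_nonneg fun _ => abs_nonneg _), fun ε hε => ?_⟩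
  have hδ : 0 < ε / 2 := half_pos hε
  set g : E → ℤ := fun x => ⌊f x / (ε / 2)⌋
  have hg : Measurable g := (hf.div_const _).floor
  have hbad : Tendsto (fun n => 2 * C * P.real {ω | g (X ω) ≠ g (Y n ω)}) atTop
      (𝓝 (2 * C * 0)) :=
    ((ENNReal.tendsto_toReal ENNReal.zero_ne_top).comp
      (tendsto_measure_comp_ne_of_finite_range hg (finite_range_floor_div hC hδ) hsep)).const_mul _
  filter_upwards [hbad.eventually_lt_const (by linarith : 2 * C * 0 < ε / 2)] with n hn
  calc ∫ ω, |f (X ω) - f (Y n ω)| ∂P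
      ≤ ε / 2 + 2 * C * P.real {ω | g (X ω) ≠ g (Y n ω)} :=
        integral_abs_comp_sub_le hg hX (hY n) hC fun _ _ => abs_sub_le_of_floor_div_eq hδ
    _ < ε := by linarith

lemma integral_abs_indicator_comp_sub {A : Set E} (hA : MeasurableSet A) {X Y : Ω → E}
    (hX : Measurable X) (hY : Measurable Y) :
    ∫ ω, |A.indicator 1 (X ω) - A.indicator 1 (Y ω)| ∂P = P.real ((X ⁻¹' A) ∆ (Y ⁻¹' A)) := by
  rw [← integral_indicator_one ((hX hA).symmDiff (hY hA))]
  congr 1 with ω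
  exact (Set.abs_indicator_symmDiff (X ⁻¹' A) (Y ⁻¹' A) 1 ω).symm.trans
    (abs_of_nonneg (Set.indicator_nonneg (fun _ _ => zero_le_one) ω))

lemma tendsto_measure_inter_compl_of_tendsto_measureReal_symmDiff [IsFiniteMeasure P]
    {s : Set Ω} {t : ℕ → Set Ω} (h : Tendsto (fun n => P.real (s ∆ t n)) atTop (𝓝 0)) :
    Tendsto (fun n => P (s ∩ (t n)ᶜ)) atTop (𝓝 0) := by
  rw [← ENNReal.tendsto_toReal_iff (fun _ => measure_ne_top _ _) ENNReal.zero_ne_top]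
  exact squeeze_zero (fun _ => ENNReal.toReal_nonneg)
    (fun n => measureReal_mono (Set.subset_union_left (t := t n \ s))) h

lemma tendsto_measure_of_tendsto_measureReal_symmDiff [IsFiniteMeasure P]
    {s : Set Ω} {t : ℕ → Set Ω} (hs : MeasurableSet s) (ht : ∀ n, MeasurableSet (t n))
    (h : Tendsto (fun n => P.real (s ∆ t n)) atTop (𝓝 0)) :
    Tendsto (fun n => P (t n)) atTop (𝓝 (P s)) := by
  rw [← ENNReal.tendsto_toReal_iff (fun _ => measure_ne_top _ _) (measure_ne_top _ _),
    tendsto_iff_dist_tendsto_zero]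
  refine squeeze_zero (fun _ => dist_nonneg) (fun n => ?_) h
  rw [Real.dist_eq, abs_sub_comm]
  exact abs_measureReal_sub_le_measureReal_symmDiff hs.nullMeasurableSet (ht n).nullMeasurableSet

end

theorem stmt1 {Ω E : Type*} [MeasurableSpace Ω] [MeasurableSpace E]
    (P : Measure Ω) [IsProbabilityMeasure P]
    (X : Ω → E) (Xn : ℕ → Ω → E)
    (hX : Measurable X) (hXn : ∀ n, Measurable (Xn n))
    (𝔖 : Set (Set E)) (h𝔖meas : ∀ S ∈ 𝔖, MeasurableSet S)
    (happrox : ∀ A : Set E, MeasurableSet A → ∀ ε : ℝ≥0∞, 0 < ε →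
      ∃ S ∈ 𝔖, P (X ⁻¹' (symmDiff A S)) < ε) :
    ((∀ S ∈ 𝔖,
        Tendsto (fun n => P (X ⁻¹' S ∩ Xn n ⁻¹' Sᶜ)) atTop (𝓝 0)) ∧
      (∀ A : Set E, MeasurableSet A →
        Tendsto (fun n => P (Xn n ⁻¹' A)) atTop (𝓝 (P (X ⁻¹' A)))))
    ↔ (∀ f : E → ℝ, Measurable f → (∃ C : ℝ, ∀ x, |f x| ≤ C) →
        Tendsto (fun n => ∫ ω, |f (X ω) - f (Xn n ω)| ∂P) atTop (𝓝 0)) := by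
  constructor
  · rintro ⟨h𝔖, hlaw⟩ f hf ⟨C, hC⟩
    exact tendsto_integral_abs_comp_sub_of_tendsto_measure hX hXn
      (fun A hA => tendsto_measure_preimage_inter_preimage_compl_of_approx h𝔖meas happrox
        h𝔖 hlaw hA) hf hC
  · intro hL1
    have hsymm : ∀ A : Set E, MeasurableSet A →
        Tendsto (fun n => P.real ((X ⁻¹' A) ∆ (Xn n ⁻¹' A))) atTop (𝓝 0) := fun A hA => by
      simpa only [integral_abs_indicator_comp_sub hA hX (hXn _)] using
        hL1 (A.indicator 1) (measurable_const.indicator hA)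
          ⟨1, fun x => by by_cases hx : x ∈ A <;> simp [hx]⟩
    exact ⟨fun S hS => tendsto_measure_inter_compl_of_tendsto_measureReal_symmDiff
        (hsymm S (h𝔖meas S hS)),
      fun A hA => tendsto_measure_of_tendsto_measureReal_symmDiff (hX hA) (fun n => hXn n hA)
        (hsymm A hA)⟩
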